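/- For natural numbers k and k', there exists a ring isomorphism from ℤ[x,y]/(x², y²−k·x·y) to ℤ[x,y]/(x², y²−k'·x·y) mapping the ℤ-span of {x,y} onto the ℤ-span of {x,y} if and only if k ≡ k' (mod 2). -/
import Mathlib

open MvPolynomial

section Setup

noncomputable abbrev P2 := MvPolynomial (Fin 2) ℤ

noncomputable abbrev Ik (k : ℕ) : Ideal P2 :=
  Ideal.span ({X 0 ^ 2, X 1 ^ 2 - (k : P2) * (X 0 * X 1)} : Set P2)

noncomputable abbrev Rk (k : ℕ) := P2 ⧸ Ik k

/-- The substitution `x ↦ x`, `y ↦ y + t x`. -/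
noncomputable def subst (t : ℤ) : P2 →ₐ[ℤ] P2 := aeval ![X 0, X 1 + C t * X 0]

lemma subst_X0 (t : ℤ) : subst t (X 0) = X 0 := by simp [subst]

lemma subst_X1 (t : ℤ) : subst t (X 1) = X 1 + C t * X 0 := by simp [subst]

lemma subst_C (t s : ℤ) : subst t (C s) = C s := by
  rw [show (C s : P2) = algebraMap ℤ P2 s from rfl]; exact AlgHom.commutes _ s

lemma subst_inv (t : ℤ) (p : P2) : subst (-t) (subst t p) = p := by
  have h : (subst (-t)).comp (subst t) = AlgHom.id ℤ P2 := by
    apply MvPolynomial.algHom_ext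
    intro i
    have h2 : i = 0 ∨ i = 1 := by omega
    rcases h2 with rfl | rfl
    · simp [subst]
    · simp only [AlgHom.comp_apply, AlgHom.id_apply, subst_X1]
      rw [map_add, map_mul, subst_X1, subst_X0, subst_C, map_neg]
      ring
  calc subst (-t) (subst t p) = ((subst (-t)).comp (subst t)) p := rfl
    _ = p := by rw [h]; rfl

lemma cast_nat_eq (n : ℕ) : ((n : ℕ) : P2) = C ((n : ℕ) : ℤ) := by
  simp [map_natCast]

lemma subst_gen2 (k k' : ℕ) (t : ℤ) (ht : (k : ℤ) = (k' : ℤ) + 2 * t) :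
    subst t (X 1 ^ 2 - (k : P2) * (X 0 * X 1)) =
      (C t * C t - (k : P2) * C t) * (X 0 ^ 2) + (X 1 ^ 2 - (k' : P2) * (X 0 * X 1)) := by
  have hkC : ((k : ℕ) : P2) = ((k' : ℕ) : P2) + 2 * C t := by
    have h2 : (C ((k:ℕ):ℤ) : P2) = C ((k':ℕ):ℤ) + C 2 * C t := by
      rw [← map_mul, ← map_add]; exact congrArg C ht
    rw [cast_nat_eq, cast_nat_eq k']
    rw [h2, map_ofNat]
  rw [map_sub, map_mul, map_mul, map_pow, subst_X0, subst_X1,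
    show ((subst t) ((k : P2)) : P2) = (k : P2) from map_natCast _ k]
  linear_combination (-(X 0 * X 1)) * hkC

lemma subst_gen2_mem (k k' : ℕ) (t : ℤ) (ht : (k : ℤ) = (k' : ℤ) + 2 * t) :
    subst t (X 1 ^ 2 - (k : P2) * (X 0 * X 1)) ∈ Ik k' := by
  rw [subst_gen2 k k' t ht]
  exact Ideal.add_mem _
    (Ideal.mul_mem_left _ _ (Ideal.subset_span (by simp)))
    (Ideal.subset_span (by simp))

lemma gen_ker (k k' : ℕ) (t : ℤ) (ht : (k : ℤ) = (k' : ℤ) + 2 * t) :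
    ∀ p ∈ Ik k, ((Ideal.Quotient.mk (Ik k')).comp (subst t).toRingHom) p = 0 := by
  intro p hp
  have hle : Ik k ≤ RingHom.ker ((Ideal.Quotient.mk (Ik k')).comp (subst t).toRingHom) := by
    rw [Ideal.span_le]
    intro q hq
    simp only [Set.mem_insert_iff, Set.mem_singleton_iff] at hq
    rcases hq with rfl | rfl
    · rw [SetLike.mem_coe, RingHom.mem_ker, RingHom.comp_apply]
      rw [show ((subst t).toRingHom (X 0 ^ 2) : P2) = X 0 ^ 2 by
        show subst t (X 0 ^ 2) = X 0 ^ 2; rw [map_pow, subst_X0]]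
      rw [Ideal.Quotient.eq_zero_iff_mem]
      exact Ideal.subset_span (by simp)
    · rw [SetLike.mem_coe, RingHom.mem_ker, RingHom.comp_apply]
      rw [Ideal.Quotient.eq_zero_iff_mem]
      exact subst_gen2_mem k k' t ht
  exact hle hp

/-- Lift of the substitution to the quotient rings. -/
noncomputable def liftHom (k k' : ℕ) (t : ℤ) (ht : (k : ℤ) = (k' : ℤ) + 2 * t) :
    Rk k →+* Rk k' :=
  Ideal.Quotient.lift (Ik k) ((Ideal.Quotient.mk (Ik k')).comp (subst t).toRingHom)
    (gen_ker k k' t ht)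

lemma liftHom_mk (k k' : ℕ) (t : ℤ) (ht : (k : ℤ) = (k' : ℤ) + 2 * t) (p : P2) :
    liftHom k k' t ht (Ideal.Quotient.mk (Ik k) p) = Ideal.Quotient.mk (Ik k') (subst t p) :=
  rfl

end Setup

section Equiv

/-- The induced ring equivalence between the quotients. -/
noncomputable def rEquiv (k k' : ℕ) (t : ℤ) (ht : (k : ℤ) = (k' : ℤ) + 2 * t)
    (ht' : (k' : ℤ) = (k : ℤ) + 2 * (-t)) : Rk k ≃+* Rk k' where
  toFun := liftHom k k' t ht
  invFun := liftHom k' k (-t) ht'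
  left_inv := by
    intro z
    obtain ⟨p, rfl⟩ := Ideal.Quotient.mk_surjective z
    rw [liftHom_mk, liftHom_mk, subst_inv]
  right_inv := by
    intro z
    obtain ⟨p, rfl⟩ := Ideal.Quotient.mk_surjective z
    rw [liftHom_mk, liftHom_mk]
    have h := subst_inv (-t) p
    rw [neg_neg] at h
    rw [h]
  map_mul' := (liftHom k k' t ht).map_mul
  map_add' := (liftHom k k' t ht).map_add

lemma span_pair_add_smul {R : Type*} [CommRing R] (x y : R) (t : ℤ) :
    Submodule.span ℤ ({x, y + (t : R) * x} : Set R) = Submodule.span ℤ ({x, y} : Set R) := by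
  apply le_antisymm
  · rw [Submodule.span_le]
    rintro z hz
    simp only [Set.mem_insert_iff, Set.mem_singleton_iff] at hz
    rcases hz with rfl | rfl
    · exact Submodule.subset_span (by simp)
    · refine Submodule.add_mem _ (Submodule.subset_span (by simp)) ?_
      rw [← zsmul_eq_mul]
      exact Submodule.smul_mem _ t (Submodule.subset_span (by simp))
  · rw [Submodule.span_le]
    rintro z hz
    simp only [Set.mem_insert_iff, Set.mem_singleton_iff] at hz
    rcases hz with rfl | rfl
    · exact Submodule.subset_span (by simp)
    · have hzy : z = (z + (t : R) * x) + (-t : ℤ) • x := by push_cast [zsmul_eq_mul]; ring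
      rw [hzy]
      refine Submodule.add_mem _ (Submodule.subset_span (by simp)) ?_
      exact Submodule.smul_mem _ _ (Submodule.subset_span (by simp))

lemma rEquiv_image (k k' : ℕ) (t : ℤ) (ht : (k : ℤ) = (k' : ℤ) + 2 * t)
    (ht' : (k' : ℤ) = (k : ℤ) + 2 * (-t)) :
    (rEquiv k k' t ht ht') '' (Submodule.span ℤ
        ({Ideal.Quotient.mk (Ik k) (X 0), Ideal.Quotient.mk (Ik k) (X 1)} : Set (Rk k)) : Set (Rk k)) =
      (Submodule.span ℤ
        ({Ideal.Quotient.mk (Ik k') (X 0), Ideal.Quotient.mk (Ik k') (X 1)} : Set (Rk k')) : Set (Rk k')) := by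
  set e := rEquiv k k' t ht ht'
  set F : Rk k →ₗ[ℤ] Rk k' :=
    ((e : Rk k →+* Rk k').toIntAlgHom).toLinearMap with hF
  have hfun : ⇑e = ⇑F := rfl
  have hFx : F (Ideal.Quotient.mk (Ik k) (X 0)) = Ideal.Quotient.mk (Ik k') (X 0) := by
    show e (Ideal.Quotient.mk (Ik k) (X 0)) = Ideal.Quotient.mk (Ik k') (X 0)
    show liftHom k k' t ht (Ideal.Quotient.mk (Ik k) (X 0)) = Ideal.Quotient.mk (Ik k') (X 0)
    rw [liftHom_mk, subst_X0]
  have hFy : F (Ideal.Quotient.mk (Ik k) (X 1)) =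
      Ideal.Quotient.mk (Ik k') (X 1) + (t : Rk k') * Ideal.Quotient.mk (Ik k') (X 0) := by
    show liftHom k k' t ht (Ideal.Quotient.mk (Ik k) (X 1)) = _
    rw [liftHom_mk, subst_X1, map_add, map_mul,
      show (C t : P2) = ((t : ℤ) : P2) from (eq_intCast (C : ℤ →+* P2) t).symm, map_intCast]
  rw [hfun, ← Submodule.map_coe, Submodule.map_span, Set.image_pair, hFx, hFy,
    span_pair_add_smul]

end Equiv

section A4sec

structure A4 where
  u : Bool
  x : Bool
  y : Bool
  z : Bool
deriving DecidableEq, Fintype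

namespace A4

instance : Zero A4 := ⟨⟨false,false,false,false⟩⟩
instance : One A4 := ⟨⟨true,false,false,false⟩⟩
instance : Add A4 := ⟨fun a b => ⟨xor a.u b.u, xor a.x b.x, xor a.y b.y, xor a.z b.z⟩⟩
instance : Neg A4 := ⟨fun a => a⟩
instance : Mul A4 := ⟨fun a b =>
  ⟨a.u && b.u, xor (a.u && b.x) (a.x && b.u), xor (a.u && b.y) (a.y && b.u),
   xor (xor (a.u && b.z) (a.z && b.u)) (xor (xor (a.x && b.y) (a.y && b.x)) (a.y && b.y))⟩⟩

private theorem h1 : ∀ a b c : A4, a + b + c = a + (b + c) := by decide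
private theorem h2 : ∀ a : A4, 0 + a = a := by decide
private theorem h3 : ∀ a : A4, a + 0 = a := by decide
private theorem h4 : ∀ a b : A4, a + b = b + a := by decide
private theorem h5 : ∀ a : A4, -a + a = 0 := by decide
private theorem h6 : ∀ a b c : A4, a * b * c = a * (b * c) := by decide
private theorem h7 : ∀ a : A4, 1 * a = a := by decide
private theorem h8 : ∀ a : A4, a * 1 = a := by decide
private theorem h9 : ∀ a b c : A4, a * (b + c) = a * b + a * c := by decide
private theorem h10 : ∀ a b c : A4, (a + b) * c = a * c + b * c := by decide
private theorem h11 : ∀ a b : A4, a * b = b * a := by decide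
private theorem h12 : ∀ a : A4, 0 * a = 0 := by decide
private theorem h13 : ∀ a : A4, a * 0 = 0 := by decide

instance instAddCommGroup : AddCommGroup A4 where
  add_assoc := h1
  zero_add := h2
  add_zero := h3
  add_comm := h4
  neg_add_cancel := h5
  nsmul := nsmulRec
  zsmul := zsmulRec

instance instCommRing : CommRing A4 where
  __ := instAddCommGroup
  mul_assoc := h6
  one_mul := h7
  mul_one := h8
  left_distrib := h9
  right_distrib := h10
  mul_comm := h11
  zero_mul := h12
  mul_zero := h13

def ex : A4 := ⟨false,true,false,false⟩
def ey : A4 := ⟨false,false,true,false⟩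

theorem addself : ∀ a : A4, a + a = 0 := by decide

theorem two_mul_eq_zero (a : A4) : 2 * a = 0 := by
  rw [two_mul]; exact addself a

theorem cast_odd {k : ℕ} (hk : k % 2 = 1) : (k : A4) = 1 := by
  obtain ⟨m, hm⟩ : ∃ m, k = 2 * m + 1 := ⟨k / 2, by omega⟩
  subst hm
  push_cast
  rw [two_mul_eq_zero, zero_add]

end A4

/-- Evaluation of `Rk k` (for odd `k`) in the 16-element ring `A4`. -/
noncomputable def psi (k : ℕ) (hk : k % 2 = 1) : Rk k →+* A4 :=
  Ideal.Quotient.lift (Ik k) (aeval ![A4.ex, A4.ey]).toRingHom (by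
    intro p hp
    have hle : Ik k ≤ RingHom.ker (aeval ![A4.ex, A4.ey]).toRingHom := by
      rw [Ideal.span_le]
      rintro q hq
      simp only [Set.mem_insert_iff, Set.mem_singleton_iff] at hq
      rcases hq with rfl | rfl
      · rw [SetLike.mem_coe, RingHom.mem_ker]
        show aeval ![A4.ex, A4.ey] (X 0 ^ 2) = 0
        rw [map_pow, aeval_X]
        show A4.ex ^ 2 = 0
        decide
      · rw [SetLike.mem_coe, RingHom.mem_ker]
        show aeval ![A4.ex, A4.ey] (X 1 ^ 2 - (k : P2) * (X 0 * X 1)) = 0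
        rw [map_sub, map_mul, map_mul, map_pow, aeval_X, aeval_X, map_natCast,
          A4.cast_odd hk]
        show A4.ey ^ 2 - 1 * (A4.ex * A4.ey) = 0
        decide
    exact hle hp)

lemma psi_mk (k : ℕ) (hk : k % 2 = 1) (p : P2) :
    psi k hk (Ideal.Quotient.mk (Ik k) p) = aeval ![A4.ex, A4.ey] p := rfl

set_option maxHeartbeats 1000000 in
lemma necessity (k k' : ℕ) (hk : k % 2 = 1) (hk' : k' % 2 = 0)
    (e : Rk k ≃+* Rk k')
    (he : e '' (Submodule.span ℤ
        ({Ideal.Quotient.mk (Ik k) (X 0), Ideal.Quotient.mk (Ik k) (X 1)} : Set (Rk k)) : Set (Rk k)) =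
      (Submodule.span ℤ
        ({Ideal.Quotient.mk (Ik k') (X 0), Ideal.Quotient.mk (Ik k') (X 1)} : Set (Rk k')) : Set (Rk k'))) :
    False := by
  obtain ⟨m, hm⟩ : ∃ m, k' = 2 * m := ⟨k' / 2, by omega⟩
  set x' : Rk k' := Ideal.Quotient.mk (Ik k') (X 0) with hx'def
  set y' : Rk k' := Ideal.Quotient.mk (Ik k') (X 1) with hy'def
  set y : Rk k := Ideal.Quotient.mk (Ik k) (X 1) with hydef
  -- e y lies in the span of x', y'
  have hy_mem : y ∈ (Submodule.span ℤ
      ({Ideal.Quotient.mk (Ik k) (X 0), y} : Set (Rk k)) : Set (Rk k)) :=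
    Submodule.subset_span (by simp)
  have h1 : e y ∈ (Submodule.span ℤ ({x', y'} : Set (Rk k')) : Set (Rk k')) := by
    rw [← he]
    exact Set.mem_image_of_mem e hy_mem
  obtain ⟨a, b, hab⟩ := Submodule.mem_span_pair.mp h1
  -- relations in Rk k'
  have hx2 : x' * x' = 0 := by
    rw [hx'def, ← map_mul, Ideal.Quotient.eq_zero_iff_mem]
    have : (X 0 * X 0 : P2) = X 0 ^ 2 := by ring
    rw [this]
    exact Ideal.subset_span (by simp)
  have hy2 : y' * y' = ((k' : ℕ) : Rk k') * (x' * y') := by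
    have hz : Ideal.Quotient.mk (Ik k') (X 1 ^ 2 - (k' : P2) * (X 0 * X 1)) = 0 :=
      Ideal.Quotient.eq_zero_iff_mem.mpr (Ideal.subset_span (by simp))
    rw [map_sub, map_mul, map_mul, map_pow, map_natCast, sub_eq_zero] at hz
    rw [hy'def, hx'def, ← map_mul, show (X 1 * X 1 : P2) = X 1 ^ 2 by ring, map_pow, hz]
  have hk'cast : ((k' : ℕ) : Rk k') = 2 * ((m : ℕ) : Rk k') := by
    rw [hm]; push_cast; ring
  -- the square of e y is twice something
  have hsq : e y * e y = 2 * (((a * b + (m : ℤ) * b ^ 2 : ℤ) : Rk k') * (x' * y')) := by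
    rw [← hab]
    push_cast [zsmul_eq_mul]
    linear_combination ((a : Rk k')^2) * hx2 + ((b : Rk k')^2) * hy2 +
      ((b : Rk k')^2 * (x' * y')) * hk'cast
  have h2 : y * y = 2 * (e.symm (((a * b + (m : ℤ) * b ^ 2 : ℤ) : Rk k') * (x' * y'))) := by
    apply e.injective
    rw [map_mul, hsq, map_mul, RingEquiv.apply_symm_apply, map_ofNat]
  -- evaluate in A4
  have h3 := congrArg (psi k hk) h2
  rw [map_mul, map_mul, map_ofNat, A4.two_mul_eq_zero] at h3
  rw [hydef, psi_mk] at h3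
  rw [aeval_X] at h3
  have h4 : A4.ey * A4.ey = 0 := by
    have : (![A4.ex, A4.ey] 1 : A4) = A4.ey := rfl
    rwa [this] at h3
  exact absurd h4 (by decide)

end A4sec

/-- There is a ring isomorphism `ℤ[x,y]/(x², y²−k·xy) ≃ ℤ[x,y]/(x², y²−k'·xy)`
mapping the ℤ-span of `{x,y}` onto the ℤ-span of `{x,y}` iff `k ≡ k' (mod 2)`. -/
theorem stmt_17 (k k' : ℕ) :
    (∃ e : (MvPolynomial (Fin 2) ℤ ⧸ Ideal.span
        ({X 0 ^ 2, X 1 ^ 2 - (k : MvPolynomial (Fin 2) ℤ) * (X 0 * X 1)} :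
          Set (MvPolynomial (Fin 2) ℤ))) ≃+*
      (MvPolynomial (Fin 2) ℤ ⧸ Ideal.span
        ({X 0 ^ 2, X 1 ^ 2 - (k' : MvPolynomial (Fin 2) ℤ) * (X 0 * X 1)} :
          Set (MvPolynomial (Fin 2) ℤ))),
      e '' (Submodule.span ℤ
          ({Ideal.Quotient.mk _ (X 0), Ideal.Quotient.mk _ (X 1)} :
            Set (MvPolynomial (Fin 2) ℤ ⧸ Ideal.span
              ({X 0 ^ 2, X 1 ^ 2 - (k : MvPolynomial (Fin 2) ℤ) * (X 0 * X 1)} :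
                Set (MvPolynomial (Fin 2) ℤ)))) : Set _) =
        (Submodule.span ℤ
          ({Ideal.Quotient.mk _ (X 0), Ideal.Quotient.mk _ (X 1)} :
            Set (MvPolynomial (Fin 2) ℤ ⧸ Ideal.span
              ({X 0 ^ 2, X 1 ^ 2 - (k' : MvPolynomial (Fin 2) ℤ) * (X 0 * X 1)} :
                Set (MvPolynomial (Fin 2) ℤ)))) : Set _)) ↔
    k % 2 = k' % 2 := by
  constructor
  · rintro ⟨e, he⟩
    by_contra hne
    rcases Nat.mod_two_eq_zero_or_one k with hk | hk <;>
      rcases Nat.mod_two_eq_zero_or_one k' with hk' | hk'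
    · exact hne (hk.trans hk'.symm)
    · have hcomp : (⇑e.symm ∘ ⇑e) = id := funext fun z => e.symm_apply_apply z
      have he' : ⇑e.symm '' (Submodule.span ℤ
          ({Ideal.Quotient.mk (Ik k') (X 0), Ideal.Quotient.mk (Ik k') (X 1)} : Set (Rk k')) : Set (Rk k')) =
          (Submodule.span ℤ
          ({Ideal.Quotient.mk (Ik k) (X 0), Ideal.Quotient.mk (Ik k) (X 1)} : Set (Rk k)) : Set (Rk k)) := by
        rw [← he, ← Set.image_comp, hcomp, Set.image_id]
      exact absurd he' (fun h => necessity k' k hk' hk e.symm h)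
    · exact necessity k k' hk hk' e he
    · exact hne (hk.trans hk'.symm)
  · intro hpar
    have ht : (k : ℤ) = (k' : ℤ) + 2 * (((k : ℤ) - (k' : ℤ)) / 2) := by omega
    have ht' : (k' : ℤ) = (k : ℤ) + 2 * (-(((k : ℤ) - (k' : ℤ)) / 2)) := by omega
    exact ⟨rEquiv k k' _ ht ht', rEquiv_image k k' _ ht ht'⟩
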